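/- arXiv:1501.03694 — 2 statements merged into one kernel-verified Lean document; each statement's English description precedes it below -/
import Mathlib

section
/- Let d ∈ (−1/2, 0) and t ∈ ℝ. Then the Mandelbrot–van Ness kernel function s ↦ (max(t−s,0))^d − (max(−s,0))^d belongs to both L¹(ℝ) and L²(ℝ) with respect to Lebesgue measure. -/
/-!
Write `K_t(s) = (t - s)₊ ^ d - (-s)₊ ^ d` with `d < 0` and `1 ≤ p < ∞`, `d p > -1`.
For `t ≥ 0`, `K_t` vanishes on `(t, ∞)`, and on `(-1, t]` each of its two terms is in `Lᵖ`
because its singularity `|a - s| ^ d` has `d p > -1`. On `(-∞, -1]` the mean value theorem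
gives `|K_t(s)| ≤ |d| t (-s) ^ (d - 1)`, which is in `Lᵖ` there since `(d - 1) p < -1`.
The case `t < 0` follows from `K_t(s) = -K_{-t}(s - t)` and translation invariance.
-/

open MeasureTheory Set Real
open scoped ENNReal

noncomputable def mvnKernel (d t s : ℝ) : ℝ := (max (t - s) 0) ^ d - (max (-s) 0) ^ d

section

variable {α : Type*} [MeasurableSpace α] {μ : Measure α} {p : ℝ≥0∞}

lemma MeasureTheory.MemLp.of_restrict_of_restrict_compl {E : Type*} [NormedAddCommGroup E]
    {f : α → E} {s : Set α} (hs : MeasurableSet s) (h : MemLp f p (μ.restrict s))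
    (hc : MemLp f p (μ.restrict sᶜ)) : MemLp f p μ := by
  rw [← indicator_self_add_compl s f]
  exact ((memLp_indicator_iff_restrict hs).2 h).add ((memLp_indicator_iff_restrict hs.compl).2 hc)

lemma memLp_rpow_iff_integrable_rpow_mul {f : α → ℝ} {r : ℝ} (hf : ∀ᵐ x ∂μ, 0 ≤ f x)
    (hmeas : AEStronglyMeasurable (fun x => f x ^ r) μ) (hp0 : p ≠ 0) (hptop : p ≠ ∞) :
    MemLp (fun x => f x ^ r) p μ ↔ Integrable (fun x => f x ^ (r * p.toReal)) μ := by
  rw [← integrable_norm_rpow_iff hmeas hp0 hptop]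
  refine integrable_congr ?_
  filter_upwards [hf] with x hx
  rw [norm_eq_abs, abs_of_nonneg (rpow_nonneg hx r), ← rpow_mul hx]

end

lemma integrableOn_Ioi_max_sub_rpow {r : ℝ} (hr : -1 < r) (hr0 : r ≠ 0) (a b : ℝ) :
    IntegrableOn (fun s => (max (a - s) 0) ^ r) (Ioi b) := by
  have hIoc : IntegrableOn (fun s => (max (a - s) 0) ^ r) (Ioc b a) := by
    have h := ((intervalIntegral.intervalIntegrable_rpow' (a := 0) (b := a - b) hr).comp_sub_left
      a).symm
    simp only [sub_zero, sub_sub_cancel] at h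
    refine (h.def'.mono_set Ioc_subset_uIoc).congr_fun (fun s hs => ?_) measurableSet_Ioc
    rw [max_eq_left (sub_nonneg.2 hs.2)]
  have hIoi : IntegrableOn (fun s => (max (a - s) 0) ^ r) (Ioi a) := by
    refine integrableOn_zero.congr_fun (fun s hs => ?_) measurableSet_Ioi
    rw [max_eq_right (sub_nonpos.2 (le_of_lt hs)), zero_rpow hr0]
  exact (hIoc.union hIoi).mono_set fun s hs => (le_or_gt s a).imp (fun h => ⟨hs, h⟩) id

lemma integrableOn_Iic_neg_rpow {r c : ℝ} (hr : r < -1) (hc : c < 0) :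
    IntegrableOn (fun s => (-s) ^ r) (Iic c) := by
  rw [integrableOn_Iic_iff_integrableOn_Iio]
  exact (integrableOn_Ioi_rpow_of_lt hr (neg_pos.2 hc)).comp_neg_Iio

lemma abs_rpow_add_sub_rpow_le {x t d : ℝ} (hx : 0 < x) (ht : 0 ≤ t) (hd : d ≤ 1) :
    |(x + t) ^ d - x ^ d| ≤ |d| * t * x ^ (d - 1) := by
  have hderiv : ∀ y ∈ Icc x (x + t),
      HasDerivWithinAt (fun y => y ^ d) (d * y ^ (d - 1)) (Icc x (x + t)) y := fun y hy =>
    (hasDerivAt_rpow_const (Or.inl (hx.trans_le hy.1).ne')).hasDerivWithinAt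
  have hbound : ∀ y ∈ Ico x (x + t), ‖d * y ^ (d - 1)‖ ≤ |d| * x ^ (d - 1) := by
    intro y hy
    rw [norm_mul, norm_eq_abs, norm_eq_abs, abs_of_pos (rpow_pos_of_pos (hx.trans_le hy.1) _)]
    exact mul_le_mul_of_nonneg_left (rpow_le_rpow_of_nonpos hx hy.1 (by linarith)) (abs_nonneg d)
  have := norm_image_sub_le_of_norm_deriv_le_segment' hderiv hbound (x + t)
    ⟨by linarith, le_rfl⟩
  rw [norm_eq_abs, add_sub_cancel_left] at this
  linarith

lemma mvnKernel_eq_neg_mvnKernel_sub (d t s : ℝ) :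
    mvnKernel d t s = -mvnKernel d (-t) (s - t) := by
  rw [mvnKernel, mvnKernel, show -t - (s - t) = -s by ring, show -(s - t) = t - s by ring, neg_sub]

lemma abs_mvnKernel_le {d t s : ℝ} (hd : d ≤ 1) (ht : 0 ≤ t) (hs : s < 0) :
    |mvnKernel d t s| ≤ |d| * t * (-s) ^ (d - 1) := by
  have h := abs_rpow_add_sub_rpow_le (neg_pos.2 hs) ht hd
  rwa [mvnKernel, max_eq_left (by linarith), max_eq_left (by linarith), sub_eq_neg_add t]

variable {p : ℝ≥0∞} {d : ℝ}

lemma memLp_restrict_Ioi_max_sub_rpow (hp0 : p ≠ 0) (hptop : p ≠ ∞) (hd : -1 < d * p.toReal)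
    (hd0 : d ≠ 0) (a b : ℝ) :
    MemLp (fun s => (max (a - s) 0) ^ d) p (volume.restrict (Ioi b)) := by
  rw [memLp_rpow_iff_integrable_rpow_mul (.of_forall fun s => le_max_right _ _)
    (by fun_prop : Measurable _).aestronglyMeasurable hp0 hptop]
  exact integrableOn_Ioi_max_sub_rpow hd
    (mul_ne_zero hd0 (ENNReal.toReal_ne_zero.2 ⟨hp0, hptop⟩)) a b

lemma memLp_restrict_Iic_neg_rpow (hp0 : p ≠ 0) (hptop : p ≠ ∞) {r c : ℝ}
    (hr : r * p.toReal < -1) (hc : c < 0) :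
    MemLp (fun s => (-s) ^ r) p (volume.restrict (Iic c)) := by
  rw [memLp_rpow_iff_integrable_rpow_mul ?_ (by fun_prop : Measurable _).aestronglyMeasurable
    hp0 hptop]
  · exact integrableOn_Iic_neg_rpow hr hc
  · exact (ae_restrict_iff' measurableSet_Iic).2 (.of_forall fun s hs => by
      linarith [show s ≤ c from hs])

lemma memLp_mvnKernel_of_nonneg (hp : 1 ≤ p) (hptop : p ≠ ∞) (hd : -1 < d * p.toReal)
    (hd0 : d < 0) {t : ℝ} (ht : 0 ≤ t) : MemLp (mvnKernel d t) p volume := by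
  have hp0 : p ≠ 0 := (zero_lt_one.trans_le hp).ne'
  have hp1 : 1 ≤ p.toReal := by simpa using ENNReal.toReal_mono hptop hp
  have hmeas : Measurable (mvnKernel d t) := by unfold mvnKernel; fun_prop
  refine MemLp.of_restrict_of_restrict_compl (s := Iic (-1)) measurableSet_Iic ?_ ?_
  · have htail := (memLp_restrict_Iic_neg_rpow hp0 hptop (r := d - 1) (by nlinarith)
      (by norm_num : (-1 : ℝ) < 0)).const_mul (|d| * t)
    refine htail.mono' hmeas.aestronglyMeasurable ((ae_restrict_iff' measurableSet_Iic).2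
      (.of_forall fun s hs => ?_))
    exact abs_mvnKernel_le (by linarith) ht (by linarith [show s ≤ -1 from hs])
  · rw [compl_Iic]
    have hlocal := memLp_restrict_Ioi_max_sub_rpow hp0 hptop hd hd0.ne
    convert (hlocal t (-1)).sub (hlocal 0 (-1)) using 1
    ext s
    simp only [mvnKernel, zero_sub, Pi.sub_apply]

lemma memLp_mvnKernel (hp : 1 ≤ p) (hptop : p ≠ ∞) (hd : -1 < d * p.toReal) (hd0 : d < 0)
    (t : ℝ) : MemLp (mvnKernel d t) p volume := by
  rcases le_total 0 t with ht | ht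
  · exact memLp_mvnKernel_of_nonneg hp hptop hd hd0 ht
  · have h := ((memLp_mvnKernel_of_nonneg hp hptop hd hd0 (neg_nonneg.2 ht)
      ).comp_measurePreserving (measurePreserving_sub_right volume t)).neg
    convert h using 1
    ext s
    exact mvnKernel_eq_neg_mvnKernel_sub d t s

/-- For `d ∈ (-1/2, 0)` and `t ∈ ℝ`, the Mandelbrot–van Ness kernel
`s ↦ (max (t - s) 0) ^ d - (max (-s) 0) ^ d` is in `L¹(ℝ) ∩ L²(ℝ)`. -/
theorem mvn_kernel_memL1_memL2_of_neg (d t : ℝ) (hd : d ∈ Set.Ioo (-(1 / 2) : ℝ) 0) :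
    MemLp (fun s : ℝ => (max (t - s) 0) ^ d - (max (-s) 0) ^ d) 1 volume ∧
    MemLp (fun s : ℝ => (max (t - s) 0) ^ d - (max (-s) 0) ^ d) 2 volume := by
  obtain ⟨hd1, hd0⟩ := hd
  exact ⟨memLp_mvnKernel le_rfl ENNReal.one_ne_top (by rw [ENNReal.toReal_one]; linarith) hd0 t,
    memLp_mvnKernel one_le_two ENNReal.ofNat_ne_top
      (by rw [ENNReal.toReal_ofNat]; linarith) hd0 t⟩
end

section
/- Let a > 0, d ∈ (−1/2, 0) and fix r > 0. Define I(t) = ∫_ℝ f_{a,d}(t,u)² du for t > 0. Then lim_{h→∞} ( I((h+1)r) + I((h−1)r) − 2·I(hr) ) / ( (hr+a)^{d−1} ) = 2·(−d)·a^d·r², where the limit is taken over real h → ∞. (Hence the covariance γ_r(h) of two increments of length r at lag hr of the fractional subordinator is asymptotically Var(S₁)·|d|·a^d·r²·(hr+a)^{d−1}.) -/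
open MeasureTheory Filter

/-- The modified Mandelbrot–van Ness kernel
`f_{a,d}(t,s) = (a + max(-s,0))^d - (a + max(t-s,0))^d`. -/
noncomputable def modMvN (a d t s : ℝ) : ℝ :=
  (a + max (-s) 0) ^ d - (a + max (t - s) 0) ^ d

/-- `I(t) = ∫_ℝ f_{a,d}(t,u)² du`. -/
noncomputable def modMvNI (a d t : ℝ) : ℝ :=
  ∫ u : ℝ, (modMvN a d t u) ^ 2

/-!
Write `f_t = f_{a,d}(t, ·)`. After translating two of the four integrals by `r`, the second
difference `I(τ + r) + I(τ - r) - 2 I(τ)` becomes `2 ∫ f_r(u) f_r(u - τ) du`, the covariance of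
two increments of length `r` at lag `τ`. For fixed `u` and large `τ`,
`f_r(u - τ) = (τ + a - u)^d - (τ + a - u + r)^d ~ -d r (τ + a)^(d-1)`, and on the support
`u ≤ r` of `f_r` the mean value theorem bounds `f_r(u - τ)` by a constant multiple of
`(τ + a)^(d-1)`, so dominated convergence gives
`∫ f_r(u) f_r(u - τ) du ~ -d r (τ + a)^(d-1) ∫ f_r`. Finally `∫ f_r = a^d r` by explicit
antiderivatives.
-/

open Set Real Topology

theorem abs_rpow_sub_rpow_le {q x y : ℝ} (hq : q ≤ 1) (hx : 0 < x) (hxy : x ≤ y) :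
    |y ^ q - x ^ q| ≤ |q| * x ^ (q - 1) * (y - x) := by
  have hderiv : ∀ z ∈ Icc x y, HasDerivWithinAt (· ^ q) (q * z ^ (q - 1)) (Icc x y) z :=
    fun z hz => (hasDerivAt_rpow_const (Or.inl (hx.trans_le hz.1).ne')).hasDerivWithinAt
  refine norm_image_sub_le_of_norm_deriv_le_segment' hderiv (fun z hz => ?_) y ⟨hxy, le_rfl⟩
  rw [norm_mul, norm_eq_abs, norm_of_nonneg (rpow_nonneg (hx.trans_le hz.1).le _)]
  exact mul_le_mul_of_nonneg_left (rpow_le_rpow_of_nonpos hx hz.1 (by linarith)) (abs_nonneg q)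

theorem tendsto_rpow_add_sub_rpow_add_div_rpow (p α β : ℝ) :
    Tendsto (fun y => ((y + α) ^ p - (y + β) ^ p) / y ^ (p - 1)) atTop (𝓝 (p * (α - β))) := by
  set φ : ℝ → ℝ := fun t => (1 + α * t) ^ p - (1 + β * t) ^ p
  have hφ : HasDerivAt φ (p * (α - β)) 0 := by
    have hα := (((hasDerivAt_id' (0:ℝ)).const_mul α).const_add 1).rpow_const (p := p) (by simp)
    have hβ := (((hasDerivAt_id' (0:ℝ)).const_mul β).const_add 1).rpow_const (p := p) (by simp)
    refine (hα.sub hβ).congr_deriv ?_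
    norm_num
    ring
  -- with `t = y⁻¹`, the quotient is the difference quotient of `φ` at `0`
  have hslope := (hasDerivAt_iff_tendsto_slope.1 hφ).comp
    (tendsto_inv_atTop_nhdsGT_zero.mono_right (nhdsWithin_mono _ fun y hy => ne_of_gt hy))
  refine hslope.congr' ?_
  filter_upwards [eventually_gt_atTop 0, eventually_gt_atTop (-α), eventually_gt_atTop (-β)]
    with y hy hyα hyβ
  have hscale : ∀ γ : ℝ, -γ < y → (1 + γ * y⁻¹) ^ p = (y + γ) ^ p / y ^ p := by
    intro γ hγ
    rw [← div_rpow (by linarith) hy.le]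
    congr 1
    field_simp
  simp only [Function.comp, slope_def_field, φ, hscale α hyα, hscale β hyβ, rpow_sub_one hy.ne',
    mul_zero, add_zero, one_rpow, sub_self, sub_zero, div_inv_eq_mul]
  field_simp

theorem tendsto_rpow_add_sub_rpow {p : ℝ} (hp : p < 1) (c : ℝ) :
    Tendsto (fun y => (y + c) ^ p - y ^ p) atTop (𝓝 0) := by
  have hratio := tendsto_rpow_add_sub_rpow_add_div_rpow p c 0
  have hpow := tendsto_rpow_neg_atTop (show 0 < 1 - p by linarith)
  rw [neg_sub] at hpow
  have hprod : Tendsto (fun y => ((y + c) ^ p - (y + 0) ^ p) / y ^ (p - 1) * y ^ (p - 1)) atTop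
      (𝓝 0) := by simpa using hratio.mul hpow
  refine hprod.congr' ?_
  filter_upwards [eventually_gt_atTop 0] with y hy
  rw [add_zero, div_mul_cancel₀ _ (rpow_pos_of_pos hy _).ne']

theorem integrableOn_Iic_add_max_neg_rpow {a q : ℝ} (ha : 0 < a) (hq : q < -1) (t : ℝ) :
    IntegrableOn (fun u => (a + max (-u) 0) ^ q) (Iic t) := by
  have hneg : IntegrableOn (fun u : ℝ => (a + max (-u) 0) ^ q) (Iic 0) := by
    have hIoi : IntegrableOn (fun x : ℝ => (x + a) ^ q) (Ioi 0) :=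
      integrableOn_add_rpow_Ioi_of_lt hq (by linarith)
    have hIci : IntegrableOn (fun x : ℝ => (x + a) ^ q) (Ici (-0)) := by
      rw [neg_zero]; exact (integrableOn_Ici_iff_integrableOn_Ioi (by simp)).2 hIoi
    refine hIci.comp_neg_Iic.congr_fun (fun u (hu : u ≤ 0) => ?_) measurableSet_Iic
    simp only [max_eq_left (neg_nonneg.2 hu), add_comm]
  have hpos : IntegrableOn (fun u : ℝ => (a + max (-u) 0) ^ q) (Ioc 0 t) := by
    refine (integrableOn_const (C := a ^ q) measure_Ioc_lt_top.ne).congr_fun (fun u hu => ?_)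
      measurableSet_Ioc
    simp only [max_eq_right (neg_nonpos.2 hu.1.le), add_zero]
  exact (hneg.union hpos).mono_set fun u hu => by
    rcases le_or_gt u 0 with h | h
    · exact Or.inl h
    · exact Or.inr ⟨h, hu⟩

theorem hasDerivAt_const_sub_rpow {c u : ℝ} (p : ℝ) (hu : u < c) :
    HasDerivAt (fun v => (c - v) ^ p) (-(p * (c - u) ^ (p - 1))) u :=
  (((hasDerivAt_id' u).const_sub c).rpow_const (Or.inl (sub_pos.2 hu).ne')).congr_deriv (by ring)

section modMvN

variable {a d : ℝ}

theorem modMvN_of_nonpos {t s : ℝ} (hs : s ≤ 0) (hst : s ≤ t) :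
    modMvN a d t s = (a - s) ^ d - (a + t - s) ^ d := by
  rw [modMvN, max_eq_left (by linarith), max_eq_left (by linarith), ← sub_eq_add_neg,
    ← add_sub_assoc]

theorem modMvN_of_nonneg_of_le {t s : ℝ} (hs : 0 ≤ s) (hst : s ≤ t) :
    modMvN a d t s = a ^ d - (a + t - s) ^ d := by
  rw [modMvN, max_eq_right (by linarith), max_eq_left (by linarith), add_zero, add_sub_assoc]

theorem modMvN_eq_zero_of_le {t s : ℝ} (ht : 0 ≤ t) (hts : t ≤ s) : modMvN a d t s = 0 := by
  rw [modMvN, max_eq_right (by linarith), max_eq_right (by linarith), sub_self]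

theorem continuous_modMvN (ha : 0 < a) (t : ℝ) : Continuous (modMvN a d t) := by
  have hg : ∀ c : ℝ, Continuous fun s : ℝ => (a + max (c - s) 0) ^ d := fun c =>
    (continuous_const.add ((continuous_const.sub continuous_id).max continuous_const)).rpow_const
      fun s => Or.inl (add_pos_of_pos_of_nonneg ha (le_max_right _ _)).ne'
  exact ((hg 0).sub (hg t)).congr fun s => by simp only [Pi.sub_apply, zero_sub, modMvN]

theorem abs_modMvN_le (ha : 0 < a) (hd : d ≤ 1) {t : ℝ} (ht : 0 ≤ t) (s : ℝ) :
    |modMvN a d t s| ≤ |d| * t * (a + max (-s) 0) ^ (d - 1) := by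
  have hx : 0 < a + max (-s) 0 := by positivity
  have hxy : a + max (-s) 0 ≤ a + max (t - s) 0 := by gcongr; linarith
  have hyx : a + max (t - s) 0 - (a + max (-s) 0) ≤ t := by
    have : max (t - s) 0 ≤ max (-s) 0 + t :=
      max_le (by linarith [le_max_left (-s) 0]) (by linarith [le_max_right (-s) 0])
    linarith
  rw [modMvN, abs_sub_comm]
  refine (abs_rpow_sub_rpow_le hd hx hxy).trans ?_
  rw [mul_right_comm]
  gcongr

theorem integrable_modMvN_pow (ha : 0 < a) (hd : d < 0) {t : ℝ} (ht : 0 ≤ t) {n : ℕ}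
    (hn : n ≠ 0) : Integrable fun s => modMvN a d t s ^ n := by
  have hq : n * (d - 1) < -1 := by
    have : (1 : ℝ) ≤ n := by exact_mod_cast Nat.one_le_iff_ne_zero.2 hn
    nlinarith
  refine Integrable.mono' ((integrable_indicator_iff measurableSet_Iic).2
    ((integrableOn_Iic_add_max_neg_rpow ha hq t).const_mul ((|d| * t) ^ n)))
    ((continuous_modMvN ha t).pow n).aestronglyMeasurable (Eventually.of_forall fun s => ?_)
  by_cases hst : s ≤ t
  · rw [indicator_of_mem (mem_Iic.2 hst), norm_pow, norm_eq_abs, mul_comm (n : ℝ),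
      rpow_mul_natCast (by positivity), ← mul_pow]
    exact pow_le_pow_left₀ (abs_nonneg _) (abs_modMvN_le ha (by linarith) ht s) n
  · rw [indicator_of_notMem (by simpa using hst), modMvN_eq_zero_of_le ht (le_of_not_ge hst),
      zero_pow hn, norm_zero]

theorem integrable_modMvN (ha : 0 < a) (hd : d < 0) {t : ℝ} (ht : 0 ≤ t) :
    Integrable (modMvN a d t) := by
  simpa using integrable_modMvN_pow ha hd ht one_ne_zero

theorem integral_Iic_zero_modMvN (ha : 0 < a) (hd : d < 0) (hd' : d ≠ -1) {r : ℝ} (hr : 0 ≤ r) :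
    ∫ u in Iic 0, modMvN a d r u = ((a + r) ^ (d + 1) - a ^ (d + 1)) / (d + 1) := by
  have hd1 : d + 1 ≠ 0 := by contrapose! hd'; linarith
  set Φ : ℝ → ℝ := fun u => ((a + r - u) ^ (d + 1) - (a - u) ^ (d + 1)) / (d + 1)
  have hΦ : ∀ u ∈ Iic (0 : ℝ), HasDerivAt Φ (modMvN a d r u) u := by
    intro u (hu : u ≤ 0)
    refine (((hasDerivAt_const_sub_rpow (d + 1) (by linarith : u < a + r)).sub
      (hasDerivAt_const_sub_rpow (d + 1) (by linarith : u < a))).div_const (d + 1)).congr_deriv ?_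
    rw [modMvN_of_nonpos hu (by linarith), add_sub_cancel_right]
    field_simp
    ring
  have hlim : Tendsto Φ atBot (𝓝 0) := by
    have h := (tendsto_rpow_add_sub_rpow (by linarith : d + 1 < 1) r).comp
      (tendsto_atTop_add_const_left _ a tendsto_neg_atBot_atTop)
    have h' : Tendsto (fun u => ((a + -u + r) ^ (d + 1) - (a + -u) ^ (d + 1)) / (d + 1)) atBot
        (𝓝 0) := by simpa using h.div_const (d + 1)
    refine h'.congr fun u => ?_
    simp only [Φ]
    ring_nf
  rw [integral_Iic_of_hasDerivAt_of_tendsto' hΦ (integrable_modMvN ha hd hr).integrableOn hlim]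
  simp [Φ]

theorem integral_modMvN (ha : 0 < a) (hd : d < 0) (hd' : d ≠ -1) {r : ℝ} (hr : 0 ≤ r) :
    ∫ u, modMvN a d r u = a ^ d * r := by
  have hd1 : d + 1 ≠ 0 := by contrapose! hd'; linarith
  have hint := integrable_modMvN ha hd hr
  have hΨ : ∀ u ∈ uIcc 0 r,
      HasDerivAt (fun v => a ^ d * v + (a + r - v) ^ (d + 1) / (d + 1)) (modMvN a d r u) u := by
    intro u hu
    rw [uIcc_of_le hr] at hu
    refine (((hasDerivAt_id' u).const_mul _).add
      ((hasDerivAt_const_sub_rpow (d + 1) (by linarith [hu.2] : u < a + r)).div_const _)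
      ).congr_deriv ?_
    rw [modMvN_of_nonneg_of_le hu.1 hu.2, add_sub_cancel_right]
    field_simp
    ring
  have hIcc := intervalIntegral.integral_eq_sub_of_hasDerivAt hΨ
    ((continuous_modMvN ha r).intervalIntegrable 0 r)
  rw [← setIntegral_eq_integral_of_forall_compl_eq_zero (s := Iic r)
      fun u hu => modMvN_eq_zero_of_le hr (le_of_lt (not_le.1 hu)),
    ← sub_add_cancel (∫ u in Iic r, modMvN a d r u) (∫ u in Iic 0, modMvN a d r u),
    intervalIntegral.integral_Iic_sub_Iic hint.integrableOn hint.integrableOn, hIcc,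
    integral_Iic_zero_modMvN ha hd hd' hr]
  simp only [add_sub_cancel_right, sub_zero, mul_zero, zero_add]
  field_simp
  ring

theorem modMvNI_second_difference_eq_integral (ha : 0 < a) (hd : d < 0) {r τ : ℝ} (hr : 0 ≤ r)
    (hrτ : r ≤ τ) :
    modMvNI a d (τ + r) + modMvNI a d (τ - r) - 2 * modMvNI a d τ
      = 2 * ∫ u, modMvN a d r u * modMvN a d r (u - τ) := by
  have hsq : ∀ {t}, 0 ≤ t → Integrable fun u => modMvN a d t u ^ 2 :=
    fun ht => integrable_modMvN_pow ha hd ht two_ne_zero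
  have hshift : ∀ t, modMvNI a d t = ∫ u, modMvN a d t (u - r) ^ 2 :=
    fun t => (integral_sub_right_eq_self (fun u => modMvN a d t u ^ 2) r).symm
  have hτ : 0 ≤ τ := hr.trans hrτ
  rw [hshift (τ - r), two_mul]
  nth_rw 2 [hshift τ]
  unfold modMvNI
  have h₁ : Integrable fun u => modMvN a d (τ + r) u ^ 2 := hsq (by linarith)
  have h₂ : Integrable fun u => modMvN a d (τ - r) (u - r) ^ 2 :=
    (hsq (by linarith)).comp_sub_right r
  have h₃ : Integrable fun u => modMvN a d τ u ^ 2 := hsq hτ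
  have h₄ : Integrable fun u => modMvN a d τ (u - r) ^ 2 := (hsq hτ).comp_sub_right r
  rw [← integral_add h₁ h₂, ← integral_add h₃ h₄, ← integral_sub, ← integral_const_mul]
  · -- writing `g c = (a + max (c - u) 0) ^ d` and `τ' = τ + r`, this is the identity
    -- `(g 0 - g τ')² + (g r - g τ)² - (g 0 - g τ)² - (g r - g τ')² = 2 (g 0 - g r) (g τ - g τ')`
    refine integral_congr_ae (Eventually.of_forall fun u => ?_)
    simp only [modMvN, show -(u - r) = r - u by ring, show τ - r - (u - r) = τ - u by ring,
      show τ - (u - r) = τ + r - u by ring, show r - (u - τ) = τ + r - u by ring,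
      show -(u - τ) = τ - u by ring]
    ring
  · exact h₁.add h₂
  · exact h₃.add h₄

theorem tendsto_modMvN_sub_div_rpow (r u : ℝ) :
    Tendsto (fun τ => modMvN a d r (u - τ) / (τ + a) ^ (d - 1)) atTop (𝓝 (-d * r)) := by
  have h := (tendsto_rpow_add_sub_rpow_add_div_rpow d (-u) (r - u)).comp
    (tendsto_atTop_add_const_right _ a tendsto_id)
  rw [show d * (-u - (r - u)) = -d * r by ring] at h
  refine h.congr' ?_
  filter_upwards [eventually_ge_atTop u, eventually_ge_atTop (u - r)] with τ hτ hτr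
  rw [Function.comp_apply, id, modMvN_of_nonpos (by linarith) (by linarith),
    show a - (u - τ) = τ + a + -u by ring, show a + r - (u - τ) = τ + a + (r - u) by ring]

theorem abs_modMvN_sub_le (ha : 0 < a) (hd : d ≤ 1) {r τ u : ℝ} (hr : 0 ≤ r) (hrτ : 2 * r ≤ τ)
    (hu : u ≤ r) : |modMvN a d r (u - τ)| ≤ |d| * r * 2 ^ (1 - d) * (τ + a) ^ (d - 1) := by
  have hhalf : 0 < (τ + a) / 2 := by linarith
  have hmax : (τ + a) / 2 ≤ a + max (-(u - τ)) 0 := by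
    linarith [le_max_left (-(u - τ)) 0]
  have hpow : (a + max (-(u - τ)) 0) ^ (d - 1) ≤ 2 ^ (1 - d) * (τ + a) ^ (d - 1) := by
    calc (a + max (-(u - τ)) 0) ^ (d - 1) ≤ ((τ + a) / 2) ^ (d - 1) :=
          rpow_le_rpow_of_nonpos hhalf hmax (by linarith)
      _ = 2 ^ (1 - d) * (τ + a) ^ (d - 1) := by
          rw [div_rpow (by linarith) zero_le_two, div_eq_mul_inv, ← rpow_neg zero_le_two, neg_sub,
            mul_comm]
  calc |modMvN a d r (u - τ)| ≤ |d| * r * (a + max (-(u - τ)) 0) ^ (d - 1) :=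
        abs_modMvN_le ha hd hr (u - τ)
    _ ≤ |d| * r * (2 ^ (1 - d) * (τ + a) ^ (d - 1)) := by gcongr
    _ = |d| * r * 2 ^ (1 - d) * (τ + a) ^ (d - 1) := by ring

theorem tendsto_integral_modMvN_mul_sub_div_rpow (ha : 0 < a) (hd : d < 0) {r : ℝ} (hr : 0 ≤ r) :
    Tendsto (fun τ => (∫ u, modMvN a d r u * modMvN a d r (u - τ)) / (τ + a) ^ (d - 1)) atTop
      (𝓝 (-d * r * ∫ u, modMvN a d r u)) := by
  have hf := continuous_modMvN (d := d) ha r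
  have hDCT : Tendsto (fun τ => ∫ u, modMvN a d r u * (modMvN a d r (u - τ) / (τ + a) ^ (d - 1)))
      atTop (𝓝 (∫ u, modMvN a d r u * (-d * r))) := by
    refine tendsto_integral_filter_of_dominated_convergence (fun u => |d| * r * 2 ^ (1 - d) *
        |modMvN a d r u|) (Eventually.of_forall fun τ => ?_) ?_
      ((integrable_modMvN ha hd hr).abs.const_mul _)
      (Eventually.of_forall fun u => (tendsto_modMvN_sub_div_rpow r u).const_mul _)
    · exact (hf.mul ((hf.comp (continuous_id.sub continuous_const)).div_const _)
        ).aestronglyMeasurable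
    filter_upwards [eventually_ge_atTop (2 * r), eventually_gt_atTop (-a)] with τ hτ hτa
    refine Eventually.of_forall fun u => ?_
    rcases le_or_gt u r with hu | hu
    · have hpos : 0 < (τ + a) ^ (d - 1) := rpow_pos_of_pos (by linarith) _
      rw [norm_mul, norm_div, norm_eq_abs, norm_eq_abs, norm_eq_abs, abs_of_pos hpos, mul_comm]
      gcongr
      rw [div_le_iff₀ hpos]
      exact abs_modMvN_sub_le ha (by linarith) hr hτ hu
    · rw [modMvN_eq_zero_of_le hr hu.le, zero_mul, norm_zero, abs_zero, mul_zero]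
  rw [integral_mul_const, mul_comm] at hDCT
  refine hDCT.congr fun τ => ?_
  simp only [← integral_div, mul_div_assoc]

end modMvN

/-- For `a > 0`, `d ∈ (-1/2, 0)` and fixed `r > 0`, with
`I(t) = ∫_ℝ f_{a,d}(t,u)² du`, one has
`lim_{h → ∞} (I((h+1)r) + I((h-1)r) - 2 I(hr)) / (hr+a)^{d-1} = 2 (-d) a^d r²`
(limit over real `h → ∞`). -/
theorem modMvN_increment_covariance_asymptotic (a d r : ℝ) (ha : 0 < a)
    (hd : d ∈ Set.Ioo (-(1 / 2) : ℝ) 0) (hr : 0 < r) :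
    Tendsto (fun h : ℝ =>
        (modMvNI a d ((h + 1) * r) + modMvNI a d ((h - 1) * r) - 2 * modMvNI a d (h * r))
          / (h * r + a) ^ (d - 1))
      atTop (nhds (2 * (-d) * a ^ d * r ^ 2)) := by
  obtain ⟨hd₁, hd₀⟩ := hd
  have hlim := ((tendsto_integral_modMvN_mul_sub_div_rpow ha hd₀ hr.le).comp
    (tendsto_id.atTop_mul_const hr)).const_mul 2
  rw [integral_modMvN ha hd₀ (by linarith) hr.le,
    show 2 * (-d * r * (a ^ d * r)) = 2 * (-d) * a ^ d * r ^ 2 by ring] at hlim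
  refine hlim.congr' ?_
  filter_upwards [eventually_ge_atTop 1] with h hh
  rw [Function.comp_apply, id, add_one_mul, sub_one_mul,
    modMvNI_second_difference_eq_integral ha hd₀ hr.le (by nlinarith), mul_div_assoc]
end
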